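/- Let E = EuclideanSpace ℝ (Fin n), μ a Borel probability measure on E satisfying the standing integrability assumption, and u ∈ E with ‖u‖ < 1. Suppose G_u has a unique minimizer q ∈ E. Let (X_i)_{i∈ℕ} be i.i.d. with law μ on (Ω, P), and let q̂_N : Ω → E (N ∈ ℕ) be any maps such that for P-almost every ω and every N ≥ 1, q̂_N(ω) is a minimizer of the empirical loss p ↦ (1/N) ∑_{i=0}^{N−1} ρ_u(X_i(ω), p). Then q̂_N → q P-almost surely. (Euclidean case of Theorem 4.1(b): strong consistency of sample quantiles.) -/

import Mathlib

/-!
The empirical losses `F_N p = N⁻¹ ∑_{i<N} ρ_u(X_i, p)` are `(1 + ‖u‖)`-Lipschitz in `p`, uniformly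
in `N` and `ω`. The strong law gives `F_N p → G_u p` almost surely simultaneously for all `p` in a
countable dense set, hence by equicontinuity for every `p`. Since
`ρ_u(x, p) ≥ (1 - ‖u‖) (‖p‖ - ‖x‖)`, the minimizers `q̂_N` eventually stay in a fixed ball; along a
subsequence converging to a cluster point `r`, the inequalities `F_N (q̂_N) ≤ F_N p` pass to the
limit `G_u r ≤ G_u p`, so `r = q` by uniqueness.
-/

open MeasureTheory Filter Topology

/-- The data-based geometric quantile loss in Euclidean space:
`ρ_u(x,p) = ‖p − x‖ − ⟪u, p − x⟫`. -/
noncomputable def quantileLoss {n : ℕ} (u x p : EuclideanSpace ℝ (Fin n)) : ℝ :=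
  ‖p - x‖ - inner ℝ u (p - x)

open ProbabilityTheory Metric

section Lipschitz

variable {ι X Y : Type*} [PseudoMetricSpace X] [PseudoMetricSpace Y] {K : NNReal}

theorem Filter.Tendsto.apply_of_lipschitzWith {l : Filter ι} {F : ι → X → Y} {r : X} {g : Y}
    {y : ι → X} (hF : ∀ i, LipschitzWith K (F i)) (hFr : Tendsto (F · r) l (𝓝 g))
    (hy : Tendsto y l (𝓝 r)) : Tendsto (fun i => F i (y i)) l (𝓝 g) := by
  refine hFr.congr_dist
    (squeeze_zero (fun _ => dist_nonneg) (fun i => (hF i).dist_le_mul r (y i)) ?_)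
  simpa [dist_comm] using (tendsto_iff_dist_tendsto_zero.1 hy).const_mul (K : ℝ)

theorem tendsto_of_lipschitzWith_of_denseRange {κ : Type*} {l : Filter ι} {F : ι → X → Y}
    {G : X → Y} {d : κ → X} (hF : ∀ i, LipschitzWith K (F i)) (hG : Continuous G)
    (hd : DenseRange d) (hFd : ∀ k, Tendsto (F · (d k)) l (𝓝 (G (d k)))) (p : X) :
    Tendsto (F · p) l (𝓝 (G p)) :=
  hd.induction_on p
    ((LipschitzWith.uniformEquicontinuous F K hF).equicontinuous.isClosed_setOfPred_tendsto hG)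
    hFd

theorem tendsto_minimizer_of_lipschitzWith {F : ℕ → X → ℝ} {G : X → ℝ} {y : ℕ → X} {q : X}
    {s : Set X} (hF : ∀ N, LipschitzWith K (F N)) (hFG : ∀ p, Tendsto (F · p) atTop (𝓝 (G p)))
    (hq : ∀ r, (∀ p, G r ≤ G p) → r = q) (hs : IsCompact s) (hys : ∀ᶠ N in atTop, y N ∈ s)
    (hy : ∀ᶠ N in atTop, ∀ p, F N (y N) ≤ F N p) : Tendsto y atTop (𝓝 q) := by
  refine hs.tendsto_nhds_of_unique_mapClusterPt hys fun r _ hr => hq r fun p => ?_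
  obtain ⟨ψ, hψ, hyψ⟩ := hr.tendsto_subseq
  have hFyψ : Tendsto (fun k => F (ψ k) (y (ψ k))) atTop (𝓝 (G r)) :=
    ((hFG r).comp hψ.tendsto_atTop).apply_of_lipschitzWith (fun k => hF (ψ k)) hyψ
  exact le_of_tendsto_of_tendsto hFyψ ((hFG p).comp hψ.tendsto_atTop)
    ((hψ.tendsto_atTop.eventually hy).mono fun k hk => hk p)

theorem LipschitzWith.average_range {f : ℕ → X → ℝ} (hf : ∀ i, LipschitzWith K (f i)) (N : ℕ) :
    LipschitzWith K fun p => (N : ℝ)⁻¹ * ∑ i ∈ Finset.range N, f i p := by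
  refine LipschitzWith.of_dist_le_mul fun p p' => ?_
  calc dist ((N : ℝ)⁻¹ * ∑ i ∈ Finset.range N, f i p) ((N : ℝ)⁻¹ * ∑ i ∈ Finset.range N, f i p')
      = (N : ℝ)⁻¹ * dist (∑ i ∈ Finset.range N, f i p) (∑ i ∈ Finset.range N, f i p') := by
        simpa using dist_smul₀ (N : ℝ)⁻¹ (∑ i ∈ Finset.range N, f i p)
          (∑ i ∈ Finset.range N, f i p')
    _ ≤ (N : ℝ)⁻¹ * ∑ _i ∈ Finset.range N, K * dist p p' := by
        gcongr
        exact dist_sum_sum_le_of_le _ fun i _ => (hf i).dist_le_mul p p'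
    _ = ((N : ℝ)⁻¹ * N) * (K * dist p p') := by simp [mul_assoc]
    _ ≤ K * dist p p' :=
        mul_le_of_le_one_left (by positivity) (inv_mul_le_one_of_le₀ le_rfl (Nat.cast_nonneg N))

end Lipschitz

theorem LipschitzWith.integral {X α E : Type*} [PseudoMetricSpace X] [MeasurableSpace α]
    [NormedAddCommGroup E] [NormedSpace ℝ E] {μ : Measure α} [IsProbabilityMeasure μ] {K : NNReal}
    {f : X → α → E} (hf : ∀ a, LipschitzWith K (f · a)) (hfi : ∀ p, Integrable (f p) μ) :
    LipschitzWith K fun p => ∫ a, f p a ∂μ :=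
  LipschitzWith.of_dist_le_mul fun p p' => by
    rw [dist_eq_norm, ← integral_sub (hfi p) (hfi p')]
    simpa using norm_integral_le_of_norm_le_const (μ := μ)
      (ae_of_all _ fun a => dist_eq_norm (f p a) (f p' a) ▸ (hf a).dist_le_mul p p')

theorem strong_law_ae_comp {Ω β : Type*} [MeasurableSpace Ω] [MeasurableSpace β] {P : Measure Ω}
    {μ : Measure β} {X : ℕ → Ω → β} (hX : ∀ i, Measurable (X i)) (hindep : iIndepFun X P)
    (hlaw : ∀ i, P.map (X i) = μ) {f : β → ℝ} (hf : Measurable f) (hfi : Integrable f μ) :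
    ∀ᵐ ω ∂P, Tendsto (fun N : ℕ => (N : ℝ)⁻¹ * ∑ i ∈ Finset.range N, f (X i ω)) atTop
      (𝓝 (∫ x, f x ∂μ)) := by
  rw [← hlaw 0] at hfi
  have hident : ∀ i, IdentDistrib (f ∘ X i) (f ∘ X 0) P P := fun i =>
    IdentDistrib.comp ⟨(hX i).aemeasurable, (hX 0).aemeasurable, by rw [hlaw i, hlaw 0]⟩ hf
  have hslln := strong_law_ae_real (fun i => f ∘ X i) (hfi.comp_measurable (hX 0))
    (fun i j hij => (hindep.indepFun hij).comp hf hf) hident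
  rw [← hlaw 0, integral_map (hX 0).aemeasurable hfi.aestronglyMeasurable]
  filter_upwards [hslln] with ω hω
  simpa [inv_mul_eq_div] using hω

section Quantile

variable {n : ℕ}

theorem one_sub_norm_mul_le_quantileLoss (u x p : EuclideanSpace ℝ (Fin n)) :
    (1 - ‖u‖) * ‖p - x‖ ≤ quantileLoss u x p := by
  have := real_inner_le_norm u (p - x)
  rw [quantileLoss]
  linarith

theorem lipschitzWith_quantileLoss (u x : EuclideanSpace ℝ (Fin n)) :
    LipschitzWith (1 + ‖u‖₊) (quantileLoss u x) := by
  have hnorm : LipschitzWith 1 fun p : EuclideanSpace ℝ (Fin n) => ‖p - x‖ := by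
    simpa [dist_eq_norm] using LipschitzWith.dist_left x
  have hinner : LipschitzWith ‖u‖₊ fun p : EuclideanSpace ℝ (Fin n) => inner ℝ u (p - x) :=
    LipschitzWith.of_dist_le_mul fun p p' => by
      simpa [dist_eq_norm, ← inner_sub_right] using abs_real_inner_le_norm u (p - p')
  exact hnorm.sub hinner

theorem continuous_quantileLoss_left (u p : EuclideanSpace ℝ (Fin n)) :
    Continuous fun x => quantileLoss u x p := by
  unfold quantileLoss
  fun_prop

variable {μ : Measure (EuclideanSpace ℝ (Fin n))}

theorem integrable_norm_of_integrable_quantileLoss [IsFiniteMeasure μ]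
    {u p : EuclideanSpace ℝ (Fin n)} (hu : ‖u‖ < 1)
    (hint : Integrable (fun x => quantileLoss u x p) μ) : Integrable (fun x => ‖x‖) μ := by
  have hc : 0 < 1 - ‖u‖ := by linarith
  refine ((integrable_const ‖p‖).add (hint.div_const (1 - ‖u‖))).mono'
    continuous_norm.aestronglyMeasurable (ae_of_all _ fun x => ?_)
  have := one_sub_norm_mul_le_quantileLoss u x p
  calc ‖‖x‖‖ = ‖p - (p - x)‖ := by simp
    _ ≤ ‖p‖ + ‖p - x‖ := norm_sub_le _ _
    _ ≤ ‖p‖ + quantileLoss u x p / (1 - ‖u‖) := by gcongr; rwa [le_div_iff₀ hc, mul_comm]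

theorem integrable_quantileLoss [IsFiniteMeasure μ] (hμ : Integrable (fun x => ‖x‖) μ)
    (u p : EuclideanSpace ℝ (Fin n)) :
    Integrable (fun x => quantileLoss u x p) μ := by
  refine (((integrable_const ‖p‖).add hμ).const_mul (1 + ‖u‖)).mono'
    (continuous_quantileLoss_left u p).aestronglyMeasurable (ae_of_all _ fun x => ?_)
  have := (lipschitzWith_quantileLoss u x).dist_le_mul p x
  have hxx : quantileLoss u x x = 0 := by simp [quantileLoss]
  rw [hxx, dist_zero_right, dist_eq_norm] at this
  calc ‖quantileLoss u x p‖ ≤ (1 + ‖u‖) * ‖p - x‖ := by simpa using this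
    _ ≤ (1 + ‖u‖) * (‖p‖ + ‖x‖) := by gcongr; exact norm_sub_le p x

theorem lipschitzWith_integral_quantileLoss [IsProbabilityMeasure μ]
    (hμ : Integrable (fun x => ‖x‖) μ) (u : EuclideanSpace ℝ (Fin n)) :
    LipschitzWith (1 + ‖u‖₊) fun p => ∫ x, quantileLoss u x p ∂μ :=
  LipschitzWith.integral (lipschitzWith_quantileLoss u) (integrable_quantileLoss hμ u)

noncomputable def empiricalQuantileLoss (u : EuclideanSpace ℝ (Fin n))
    (x : ℕ → EuclideanSpace ℝ (Fin n)) (N : ℕ) (p : EuclideanSpace ℝ (Fin n)) : ℝ :=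
  (N : ℝ)⁻¹ * ∑ i ∈ Finset.range N, quantileLoss u (x i) p

theorem lipschitzWith_empiricalQuantileLoss (u : EuclideanSpace ℝ (Fin n))
    (x : ℕ → EuclideanSpace ℝ (Fin n)) (N : ℕ) :
    LipschitzWith (1 + ‖u‖₊) (empiricalQuantileLoss u x N) :=
  LipschitzWith.average_range (fun i => lipschitzWith_quantileLoss u (x i)) N

theorem norm_le_of_empiricalQuantileLoss_le {u : EuclideanSpace ℝ (Fin n)} (hu : ‖u‖ < 1)
    {x : ℕ → EuclideanSpace ℝ (Fin n)} {N : ℕ} (hN : 0 < N) {p q : EuclideanSpace ℝ (Fin n)}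
    (hpq : empiricalQuantileLoss u x N p ≤ empiricalQuantileLoss u x N q) :
    ‖p‖ ≤ (N : ℝ)⁻¹ * ∑ i ∈ Finset.range N, ‖x i‖
      + empiricalQuantileLoss u x N q / (1 - ‖u‖) := by
  have hc : 0 < 1 - ‖u‖ := by linarith
  have hlower : (1 - ‖u‖) * (‖p‖ - (N : ℝ)⁻¹ * ∑ i ∈ Finset.range N, ‖x i‖)
      ≤ empiricalQuantileLoss u x N p := by
    calc (1 - ‖u‖) * (‖p‖ - (N : ℝ)⁻¹ * ∑ i ∈ Finset.range N, ‖x i‖)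
        = (N : ℝ)⁻¹ * ∑ i ∈ Finset.range N, (1 - ‖u‖) * (‖p‖ - ‖x i‖) := by
          rw [← Finset.mul_sum, Finset.sum_sub_distrib, Finset.sum_const, Finset.card_range,
            nsmul_eq_mul]
          field_simp
      _ ≤ empiricalQuantileLoss u x N p := by
          refine mul_le_mul_of_nonneg_left (Finset.sum_le_sum fun i _ => ?_) (by positivity)
          exact (mul_le_mul_of_nonneg_left (norm_sub_norm_le p (x i)) hc.le).trans
            (one_sub_norm_mul_le_quantileLoss u (x i) p)
  rw [← sub_le_iff_le_add', le_div_iff₀ hc, mul_comm]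
  exact hlower.trans hpq

theorem eventually_mem_closedBall_of_empiricalQuantileLoss_le {u : EuclideanSpace ℝ (Fin n)}
    (hu : ‖u‖ < 1) {x y : ℕ → EuclideanSpace ℝ (Fin n)} {q : EuclideanSpace ℝ (Fin n)} {a b : ℝ}
    (hx : Tendsto (fun N : ℕ => (N : ℝ)⁻¹ * ∑ i ∈ Finset.range N, ‖x i‖) atTop (𝓝 a))
    (hq : Tendsto (fun N => empiricalQuantileLoss u x N q) atTop (𝓝 b))
    (hy : ∀ᶠ N in atTop, empiricalQuantileLoss u x N (y N) ≤ empiricalQuantileLoss u x N q) :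
    ∃ R, ∀ᶠ N in atTop, y N ∈ closedBall 0 R := by
  obtain ⟨R, hR⟩ := (hx.add (hq.div_const (1 - ‖u‖))).isBoundedUnder_le.mono_le
    ((hy.and (eventually_gt_atTop 0)).mono fun N hN =>
      norm_le_of_empiricalQuantileLoss_le hu hN.2 hN.1)
  exact ⟨R, (eventually_map.1 hR).mono fun N hN => mem_closedBall_zero_iff.2 hN⟩

end Quantile

theorem sample_quantiles_strongly_consistent_general
    {n : ℕ} (μ : Measure (EuclideanSpace ℝ (Fin n))) [IsProbabilityMeasure μ]
    (hμint : ∃ (u₀ p₀ : EuclideanSpace ℝ (Fin n)), ‖u₀‖ < 1 ∧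
      Integrable (fun x => quantileLoss u₀ x p₀) μ)
    (u : EuclideanSpace ℝ (Fin n)) (hu : ‖u‖ < 1)
    (q : EuclideanSpace ℝ (Fin n))
    (hq : {q' : EuclideanSpace ℝ (Fin n) | ∀ p, ∫ x, quantileLoss u x q' ∂μ
        ≤ ∫ x, quantileLoss u x p ∂μ} = {q})
    {Ω : Type*} [MeasurableSpace Ω] (P : Measure Ω)
    (X : ℕ → Ω → EuclideanSpace ℝ (Fin n))
    (hXmeas : ∀ i, Measurable (X i))
    (hXindep : ProbabilityTheory.iIndepFun X P)
    (hXlaw : ∀ i, P.map (X i) = μ)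
    (qhat : ℕ → Ω → EuclideanSpace ℝ (Fin n))
    (hqhat : ∀ᵐ ω ∂P, ∀ N : ℕ, 1 ≤ N →
      ∀ p : EuclideanSpace ℝ (Fin n),
        (N : ℝ)⁻¹ * ∑ i ∈ Finset.range N, quantileLoss u (X i ω) (qhat N ω)
          ≤ (N : ℝ)⁻¹ * ∑ i ∈ Finset.range N, quantileLoss u (X i ω) p) :
    ∀ᵐ ω ∂P, Tendsto (fun N => qhat N ω) atTop (nhds q) := by
  obtain ⟨u₀, p₀, hu₀, hint₀⟩ := hμint
  have hμ := integrable_norm_of_integrable_quantileLoss hu₀ hint₀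
  have hG := lipschitzWith_integral_quantileLoss hμ u
  let d := TopologicalSpace.denseSeq (EuclideanSpace ℝ (Fin n))
  have hd : ∀ᵐ ω ∂P, ∀ k, Tendsto (fun N => empiricalQuantileLoss u (X · ω) N (d k)) atTop
      (𝓝 (∫ x, quantileLoss u x (d k) ∂μ)) :=
    ae_all_iff.2 fun k => strong_law_ae_comp hXmeas hXindep hXlaw
      (continuous_quantileLoss_left u (d k)).measurable (integrable_quantileLoss hμ u (d k))
  have hnorm := strong_law_ae_comp hXmeas hXindep hXlaw measurable_norm hμ
  filter_upwards [hd, hnorm, hqhat] with ω hdω hnormω hqhatω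
  have hmin : ∀ᶠ N in atTop, ∀ p, empiricalQuantileLoss u (X · ω) N (qhat N ω)
      ≤ empiricalQuantileLoss u (X · ω) N p :=
    (eventually_ge_atTop 1).mono hqhatω
  have hF := tendsto_of_lipschitzWith_of_denseRange (lipschitzWith_empiricalQuantileLoss u (X · ω))
    hG.continuous (TopologicalSpace.denseRange_denseSeq _) hdω
  obtain ⟨R, hR⟩ := eventually_mem_closedBall_of_empiricalQuantileLoss_le hu hnormω (hF q)
    (hmin.mono fun N hN => hN q)
  exact tendsto_minimizer_of_lipschitzWith (lipschitzWith_empiricalQuantileLoss u (X · ω)) hF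
    (fun r hr => hq.subset hr) (isCompact_closedBall 0 R) hR hmin

/-- Euclidean case of Theorem 4.1(b): strong consistency of sample quantiles when the
population `u`-quantile is unique. -/
theorem sample_quantiles_strongly_consistent
    {n : ℕ} (μ : Measure (EuclideanSpace ℝ (Fin n))) [IsProbabilityMeasure μ]
    (hμint : ∃ (u₀ p₀ : EuclideanSpace ℝ (Fin n)), ‖u₀‖ < 1 ∧
      Integrable (fun x => quantileLoss u₀ x p₀) μ)
    (u : EuclideanSpace ℝ (Fin n)) (hu : ‖u‖ < 1)
    (q : EuclideanSpace ℝ (Fin n))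
    (hq : {q' : EuclideanSpace ℝ (Fin n) | ∀ p, ∫ x, quantileLoss u x q' ∂μ
        ≤ ∫ x, quantileLoss u x p ∂μ} = {q})
    {Ω : Type*} [MeasurableSpace Ω] (P : Measure Ω) [IsProbabilityMeasure P]
    (X : ℕ → Ω → EuclideanSpace ℝ (Fin n))
    (hXmeas : ∀ i, Measurable (X i))
    (hXindep : ProbabilityTheory.iIndepFun X P)
    (hXlaw : ∀ i, P.map (X i) = μ)
    (qhat : ℕ → Ω → EuclideanSpace ℝ (Fin n))
    (hqhat : ∀ᵐ ω ∂P, ∀ N : ℕ, 1 ≤ N →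
      ∀ p : EuclideanSpace ℝ (Fin n),
        (N : ℝ)⁻¹ * ∑ i ∈ Finset.range N, quantileLoss u (X i ω) (qhat N ω)
          ≤ (N : ℝ)⁻¹ * ∑ i ∈ Finset.range N, quantileLoss u (X i ω) p) :
    ∀ᵐ ω ∂P, Tendsto (fun N => qhat N ω) atTop (nhds q) :=
  sample_quantiles_strongly_consistent_general μ hμint u hu q hq P X hXmeas hXindep hXlaw qhat hqhat
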